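/- arXiv:2102.07376 — 7 statements merged into one kernel-verified Lean document; each statement's English description precedes it below -/
import Mathlib

section
/- Let M be a symmetric positive definite m×m real matrix and D2 a periodic second-derivative SBP operator (M·D2 = −A2 with A2 symmetric positive semidefinite) that is consistent (D2·𝟙 = 0, where 𝟙 is the all-ones vector). Then I − D2 is invertible and 𝟙ᵀ·M·(I − D2)⁻¹ = 𝟙ᵀ·M. -/
open Matrix

/-- If `M` is symmetric positive definite and `D2` is a consistent periodic
second-derivative SBP operator (`M·D2 = −A2` with `A2` symmetric positive
semidefinite, `D2·𝟙 = 0`), then `I − D2` is invertible and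
`𝟙ᵀ·M·(I − D2)⁻¹ = 𝟙ᵀ·M`. -/
theorem ones_vecMul_inv_of_consistent_second_derivative_SBP
    (m : ℕ) (D2 M A2 : Matrix (Fin m) (Fin m) ℝ)
    (hM : M.PosDef)
    (hA2 : A2.PosSemidef)
    (hSBP : M * D2 = -A2)
    (hcons : D2 *ᵥ (1 : Fin m → ℝ) = 0) :
    IsUnit (1 - D2) ∧
      (1 : Fin m → ℝ) ᵥ* (M * (1 - D2)⁻¹) = (1 : Fin m → ℝ) ᵥ* M := by
  have hMu : M * (1 - D2) = M + A2 := by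
    rw [mul_sub, mul_one, hSBP, sub_neg_eq_add]
  have hMA : (M + A2).PosDef := hM.add_posSemidef hA2
  have hMdet : IsUnit M.det := hM.det_pos.ne'.isUnit
  have hMAdet : IsUnit (M + A2).det := hMA.det_pos.ne'.isUnit
  have hu : IsUnit (1 - D2) := by
    rw [Matrix.isUnit_iff_isUnit_det] 
    have : (1 - D2) = M⁻¹ * (M + A2) := by
      rw [← hMu, ← Matrix.mul_assoc, Matrix.nonsing_inv_mul _ hMdet, Matrix.one_mul]
    rw [this]
    rw [Matrix.det_mul]
    exact (Matrix.isUnit_nonsing_inv_det _ hMdet).mul hMAdet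
  have hA2one : A2 *ᵥ (1 : Fin m → ℝ) = 0 := by
    have h1 : (M * D2) *ᵥ (1 : Fin m → ℝ) = 0 := by
      rw [← Matrix.mulVec_mulVec, hcons, Matrix.mulVec_zero]
    rw [hSBP, Matrix.neg_mulVec, neg_eq_zero] at h1
    exact h1
  have hvA2 : (1 : Fin m → ℝ) ᵥ* A2 = 0 := by
    have hsym : A2ᵀ = A2 := hA2.1
    calc (1 : Fin m → ℝ) ᵥ* A2 = (1 : Fin m → ℝ) ᵥ* A2ᵀ := by rw [hsym]
    _ = A2 *ᵥ (1 : Fin m → ℝ) := Matrix.vecMul_transpose A2 1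
    _ = 0 := hA2one
  refine ⟨hu, ?_⟩
  have hudet : IsUnit (1 - D2).det := (Matrix.isUnit_iff_isUnit_det _).mp hu
  have key : ((1 : Fin m → ℝ) ᵥ* M) ᵥ* (1 - D2) = (1 : Fin m → ℝ) ᵥ* M := by
    rw [Matrix.vecMul_vecMul, hMu, Matrix.vecMul_add, hvA2, add_zero]
  calc (1 : Fin m → ℝ) ᵥ* (M * (1 - D2)⁻¹)
      = ((1 : Fin m → ℝ) ᵥ* M) ᵥ* (1 - D2)⁻¹ := (Matrix.vecMul_vecMul _ _ _).symm
    _ = (((1 : Fin m → ℝ) ᵥ* M) ᵥ* (1 - D2)) ᵥ* (1 - D2)⁻¹ := by rw [key]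
    _ = ((1 : Fin m → ℝ) ᵥ* M) ᵥ* ((1 - D2) * (1 - D2)⁻¹) := Matrix.vecMul_vecMul _ _ _
    _ = (1 : Fin m → ℝ) ᵥ* M := by rw [Matrix.mul_nonsing_inv _ hudet, Matrix.vecMul_one]
end

section
/- (Part of Theorem 4.1.) Let (D1, M) be a consistent periodic first-derivative SBP operator (M symmetric positive definite and diagonal, M·D1 + D1ᵀ·M = 0, D1·𝟙 = 0) and D2 a consistent periodic second-derivative SBP operator with the same diagonal mass matrix M (M·D2 = −A2, A2 symmetric positive semidefinite, D2·𝟙 = 0). Let η, u : ℝ → ℝ^m be differentiable and satisfy the split-form BBM-BBM semidiscretization ∂ₜη = −(I − D2)⁻¹·D1·(u + η∘u), ∂ₜu = −(I − D2)⁻¹·(D1·η + u∘(D1·u)) for all t. Then the discrete total mass of η, namely 𝟙ᵀ·M·η(t), is constant in t. -/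
open Matrix

/-!
Write `μ = 𝟙ᵀ M`. Summation by parts and consistency give `μ D1 = -(D1 𝟙)ᵀ M = 0` and
`μ D2 = -(A2 𝟙)ᵀ = (M D2 𝟙)ᵀ = 0`, so `μ (I - D2) = μ` and hence `μ (I - D2)⁻¹ = μ`.
Therefore `μ` annihilates `(I - D2)⁻¹ D1 v` for every `v`, and the derivative of the total
mass `μ η(t)` vanishes identically.
-/

namespace Matrix

variable {n R : Type*} [Fintype n] [CommRing R]

theorem vecMul_vecMul_eq_zero_of_mul_add_transpose_mul_eq_zero {M D : Matrix n n R}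
    (hD : M * D + Dᵀ * M = 0) {v : n → R} (hv : D *ᵥ v = 0) : v ᵥ* M ᵥ* D = 0 := by
  rw [vecMul_vecMul, eq_neg_of_add_eq_zero_left hD, vecMul_neg, ← vecMul_vecMul,
    vecMul_transpose, hv, zero_vecMul, neg_zero]

theorem vecMul_vecMul_eq_zero_of_mul_eq_neg_of_isSymm {M D A : Matrix n n R} (hA : A.IsSymm)
    (hMD : M * D = -A) {v : n → R} (hv : D *ᵥ v = 0) : v ᵥ* M ᵥ* D = 0 := by
  rw [vecMul_vecMul, hMD, vecMul_neg, ← hA.eq, vecMul_transpose, ← neg_mulVec, ← hMD,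
    ← mulVec_mulVec, hv, mulVec_zero]

theorem vecMul_one_sub_inv_of_vecMul_eq_zero [DecidableEq n] {D : Matrix n n R}
    (hD : IsUnit (1 - D).det) {w : n → R} (hw : w ᵥ* D = 0) : w ᵥ* (1 - D)⁻¹ = w := by
  have hfix : w ᵥ* (1 - D) = w := by rw [vecMul_sub, vecMul_one, hw, sub_zero]
  conv_lhs => rw [← hfix]
  rw [vecMul_vecMul, mul_nonsing_inv _ hD, vecMul_one]

end Matrix

open scoped ComplexOrder in
theorem Matrix.isUnit_det_one_sub_of_mul_eq_neg {n 𝕜 : Type*} [Fintype n] [DecidableEq n]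
    [RCLike 𝕜] {M D A : Matrix n n 𝕜} (hM : M.PosDef) (hA : A.PosSemidef) (hMD : M * D = -A) :
    IsUnit (1 - D).det := by
  have hsum : M * (1 - D) = M + A := by rw [mul_sub, mul_one, hMD, sub_neg_eq_add]
  have hdet : M.det * (1 - D).det ≠ 0 := by
    rw [← det_mul, hsum]
    exact (hM.add_posSemidef hA).det_pos.ne'
  exact isUnit_iff_ne_zero.2 (right_ne_zero_of_mul hdet)

theorem HasDerivAt.const_dotProduct {ι : Type*} [Fintype ι] {f : ℝ → ι → ℝ} {f' : ι → ℝ}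
    {t : ℝ} (hf : HasDerivAt f f' t) (w : ι → ℝ) :
    HasDerivAt (fun s => w ⬝ᵥ f s) (w ⬝ᵥ f') t :=
  HasDerivAt.fun_sum fun i _ => (hasDerivAt_pi.1 hf i).const_mul (w i)

theorem dotProduct_eq_of_hasDerivAt_of_dotProduct_eq_zero {ι : Type*} [Fintype ι]
    {f f' : ℝ → ι → ℝ} (hf : ∀ t, HasDerivAt f (f' t) t) {w : ι → ℝ}
    (hw : ∀ t, w ⬝ᵥ f' t = 0) (t₁ t₂ : ℝ) : w ⬝ᵥ f t₁ = w ⬝ᵥ f t₂ := by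
  have hderiv : ∀ t, HasDerivAt (fun s => w ⬝ᵥ f s) 0 t := fun t =>
    hw t ▸ (hf t).const_dotProduct w
  exact is_const_of_deriv_eq_zero (fun t => (hderiv t).differentiableAt)
    (fun t => (hderiv t).deriv) t₁ t₂

theorem bbm_bbm_split_form_conserves_total_mass_eta_general
    (m : ℕ) (D1 D2 M A2 : Matrix (Fin m) (Fin m) ℝ)
    (hM : M.PosDef)
    (hD1 : M * D1 + D1ᵀ * M = 0)
    (hD1cons : D1 *ᵥ (1 : Fin m → ℝ) = 0)
    (hA2 : A2.PosSemidef)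
    (hD2 : M * D2 = -A2)
    (hD2cons : D2 *ᵥ (1 : Fin m → ℝ) = 0)
    (η u : ℝ → Fin m → ℝ)
    (hη : ∀ t, HasDerivAt η (-((1 - D2)⁻¹ *ᵥ (D1 *ᵥ (u t + η t * u t)))) t) :
    ∀ t₁ t₂ : ℝ,
      (1 : Fin m → ℝ) ⬝ᵥ (M *ᵥ η t₁) = (1 : Fin m → ℝ) ⬝ᵥ (M *ᵥ η t₂) := by
  have hμD1 : 1 ᵥ* M ᵥ* D1 = 0 :=
    vecMul_vecMul_eq_zero_of_mul_add_transpose_mul_eq_zero hD1 hD1cons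
  have hμD2 : 1 ᵥ* M ᵥ* D2 = 0 :=
    vecMul_vecMul_eq_zero_of_mul_eq_neg_of_isSymm
      (isHermitian_iff_isSymm.1 hA2.isHermitian) hD2 hD2cons
  have hμinv : 1 ᵥ* M ᵥ* (1 - D2)⁻¹ = 1 ᵥ* M :=
    vecMul_one_sub_inv_of_vecMul_eq_zero (isUnit_det_one_sub_of_mul_eq_neg hM hA2 hD2) hμD2
  intro t₁ t₂
  simp only [dotProduct_mulVec]
  refine dotProduct_eq_of_hasDerivAt_of_dotProduct_eq_zero hη (fun t => ?_) t₁ t₂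
  rw [dotProduct_neg, dotProduct_mulVec, hμinv, dotProduct_mulVec, hμD1, zero_dotProduct,
    neg_zero]

/-- For the split-form BBM-BBM semidiscretization
`∂ₜη = −(I − D2)⁻¹ D1 (u + η∘u)`, `∂ₜu = −(I − D2)⁻¹ (D1 η + u∘(D1 u))`
with consistent periodic SBP operators `D1`, `D2` sharing a diagonal
symmetric positive definite mass matrix `M`, the discrete total mass
`𝟙ᵀ·M·η(t)` is constant in time. -/
theorem bbm_bbm_split_form_conserves_total_mass_eta
    (m : ℕ) (D1 D2 M A2 : Matrix (Fin m) (Fin m) ℝ)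
    (hM : M.PosDef) (hMdiag : M.IsDiag)
    (hD1 : M * D1 + D1ᵀ * M = 0)
    (hD1cons : D1 *ᵥ (1 : Fin m → ℝ) = 0)
    (hA2 : A2.PosSemidef)
    (hD2 : M * D2 = -A2)
    (hD2cons : D2 *ᵥ (1 : Fin m → ℝ) = 0)
    (η u : ℝ → Fin m → ℝ)
    (hη : ∀ t, HasDerivAt η (-((1 - D2)⁻¹ *ᵥ (D1 *ᵥ (u t + η t * u t)))) t)
    (hu : ∀ t, HasDerivAt u (-((1 - D2)⁻¹ *ᵥ (D1 *ᵥ η t + u t * (D1 *ᵥ u t)))) t) :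
    ∀ t₁ t₂ : ℝ,
      (1 : Fin m → ℝ) ⬝ᵥ (M *ᵥ η t₁) = (1 : Fin m → ℝ) ⬝ᵥ (M *ᵥ η t₂) :=
  bbm_bbm_split_form_conserves_total_mass_eta_general m D1 D2 M A2 hM hD1 hD1cons hA2 hD2 hD2cons η
    u hη
end

section
/- (Theorem 4.1, main claim.) Let (D1, M) be a consistent periodic first-derivative SBP operator (M symmetric positive definite and diagonal, M·D1 + D1ᵀ·M = 0, D1·𝟙 = 0) and D2 a consistent periodic second-derivative SBP operator with the same diagonal mass matrix M (M·D2 = −A2, A2 symmetric positive semidefinite, D2·𝟙 = 0). Let η, u : ℝ → ℝ^m be differentiable and satisfy the split-form BBM-BBM semidiscretization ∂ₜη = −(I − D2)⁻¹·D1·(u + η∘u), ∂ₜu = −(I − D2)⁻¹·(D1·η + u∘(D1·u)) for all t. Then the discrete quadratic invariant 𝓘(η(t), u(t)) = u(t)ᵀ·M·(I − D2)·η(t) is constant in t. -/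
/-!
The invariant `𝓘(η, u) = uᵀ M (I - D2) η` is the bilinear form of the symmetric matrix
`M (I - D2) = M + A2`. Differentiating along the flow, this symmetry lets the preconditioner
`(I - D2)⁻¹` cancel against `M (I - D2)` in both terms, leaving
`-(D1 η + u ∘ D1 u)ᵀ M η - uᵀ M D1 (u + η ∘ u)`. Since `D1` is skew-adjoint for `M`, the terms
`ηᵀ M D1 η` and `uᵀ M D1 u` vanish, and since `M` is diagonal, `(u ∘ D1 u)ᵀ M η = (D1 u)ᵀ M (u ∘ η)`,
which is exactly cancelled by `uᵀ M D1 (η ∘ u) = -(D1 u)ᵀ M (η ∘ u)`: this is what the split form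
is designed for.
-/

open Matrix

namespace Matrix

section Algebra

variable {R n : Type*} [CommRing R] [Fintype n]

theorem IsSymm.dotProduct_mulVec_comm {J : Matrix n n R} (hJ : J.IsSymm) (x y : n → R) :
    x ⬝ᵥ (J *ᵥ y) = y ⬝ᵥ (J *ᵥ x) := by
  rw [← dotProduct_transpose_mulVec, hJ.eq]

theorem isSkewAdjoint_of_mul_add_transpose_mul_eq_zero {J A : Matrix n n R}
    (h : J * A + Aᵀ * J = 0) : J.IsSkewAdjoint A := by
  rw [Matrix.IsSkewAdjoint, IsAdjointPair, mul_neg]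
  exact eq_neg_of_add_eq_zero_right h

theorem IsSkewAdjoint.mulVec_dotProduct_mulVec {J A : Matrix n n R} (hA : J.IsSkewAdjoint A)
    (x y : n → R) : (A *ᵥ x) ⬝ᵥ (J *ᵥ y) = -(x ⬝ᵥ (J *ᵥ (A *ᵥ y))) := by
  rw [dotProduct_comm, ← dotProduct_transpose_mulVec, mulVec_mulVec, hA, mul_neg, neg_mulVec,
    dotProduct_neg, mulVec_mulVec]

theorem IsSkewAdjoint.dotProduct_mulVec_mulVec_self [NoZeroDivisors R] [CharZero R]
    {J A : Matrix n n R} (hA : J.IsSkewAdjoint A) (hJ : J.IsSymm) (x : n → R) :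
    x ⬝ᵥ (J *ᵥ (A *ᵥ x)) = 0 := by
  have h := hA.mulVec_dotProduct_mulVec x x
  rwa [hJ.dotProduct_mulVec_comm, CharZero.eq_neg_self_iff] at h

theorem IsDiag.mul_dotProduct_mulVec {J : Matrix n n R} (hJ : J.IsDiag) (a b c : n → R) :
    (a * b) ⬝ᵥ (J *ᵥ c) = a ⬝ᵥ (J *ᵥ (b * c)) := by
  classical
  rw [← hJ.diagonal_diag]
  simp only [mulVec_diagonal, dotProduct, Pi.mul_apply]
  exact Finset.sum_congr rfl fun i _ => by ring

theorem bbm_split_form_flux_eq_zero [NoZeroDivisors R] [CharZero R] {M D : Matrix n n R}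
    (hM : M.IsDiag) (hD : M.IsSkewAdjoint D) (η u : n → R) :
    (D *ᵥ η + u * (D *ᵥ u)) ⬝ᵥ (M *ᵥ η) + u ⬝ᵥ (M *ᵥ (D *ᵥ (u + η * u))) = 0 := by
  have hηη : (D *ᵥ η) ⬝ᵥ (M *ᵥ η) = 0 := by
    rw [hD.mulVec_dotProduct_mulVec, hD.dotProduct_mulVec_mulVec_self hM.isSymm, neg_zero]
  have huu : u ⬝ᵥ (M *ᵥ (D *ᵥ u)) = 0 := hD.dotProduct_mulVec_mulVec_self hM.isSymm u
  have hshift : (u * (D *ᵥ u)) ⬝ᵥ (M *ᵥ η) = (D *ᵥ u) ⬝ᵥ (M *ᵥ (η * u)) := by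
    rw [mul_comm, hM.mul_dotProduct_mulVec, mul_comm u]
  rw [add_dotProduct, mulVec_add, mulVec_add, dotProduct_add, hηη, huu, hshift,
    hD.mulVec_dotProduct_mulVec]
  ring

theorem dotProduct_mul_mulVec_nonsing_inv_mulVec [DecidableEq n] (M : Matrix n n R)
    {P : Matrix n n R} (hP : IsUnit P.det) (y g : n → R) :
    y ⬝ᵥ ((M * P) *ᵥ (P⁻¹ *ᵥ g)) = y ⬝ᵥ (M *ᵥ g) := by
  rw [mulVec_mulVec, mul_assoc, mul_nonsing_inv _ hP, mul_one]

theorem nonsing_inv_mulVec_dotProduct_mul_mulVec [DecidableEq n] {M P : Matrix n n R}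
    (hM : M.IsSymm) (hMP : (M * P).IsSymm) (hP : IsUnit P.det) (f x : n → R) :
    (P⁻¹ *ᵥ f) ⬝ᵥ ((M * P) *ᵥ x) = f ⬝ᵥ (M *ᵥ x) := by
  rw [hMP.dotProduct_mulVec_comm, dotProduct_mul_mulVec_nonsing_inv_mulVec M hP,
    hM.dotProduct_mulVec_comm]

end Algebra

end Matrix

section Calculus

variable {𝕜 m n : Type*} [NontriviallyNormedField 𝕜] [Fintype n] {t : 𝕜}

theorem HasDerivAt.dotProduct {u v : 𝕜 → n → 𝕜} {u' v' : n → 𝕜} (hu : HasDerivAt u u' t)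
    (hv : HasDerivAt v v' t) : HasDerivAt (fun s => u s ⬝ᵥ v s) (u' ⬝ᵥ v t + u t ⬝ᵥ v') t := by
  rw [_root_.dotProduct, _root_.dotProduct, ← Finset.sum_add_distrib]
  exact HasDerivAt.fun_sum fun i _ => (hasDerivAt_pi.1 hu i).mul (hasDerivAt_pi.1 hv i)

theorem HasDerivAt.const_mulVec (A : Matrix m n 𝕜) {v : 𝕜 → n → 𝕜} {v' : n → 𝕜}
    (hv : HasDerivAt v v' t) : HasDerivAt (fun s => A *ᵥ v s) (A *ᵥ v') t := by
  refine hasDerivAt_pi.2 fun i => ?_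
  simpa only [mulVec, zero_dotProduct, zero_add] using (hasDerivAt_const t (A i)).dotProduct hv

end Calculus

theorem bbm_bbm_split_form_conserves_quadratic_invariant_general
    (m : ℕ) (D1 D2 M A2 : Matrix (Fin m) (Fin m) ℝ)
    (hM : M.PosDef) (hMdiag : M.IsDiag)
    (hD1 : M * D1 + D1ᵀ * M = 0)
    (hA2 : A2.PosSemidef)
    (hD2 : M * D2 = -A2)
    (η u : ℝ → Fin m → ℝ)
    (hη : ∀ t, HasDerivAt η (-((1 - D2)⁻¹ *ᵥ (D1 *ᵥ (u t + η t * u t)))) t)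
    (hu : ∀ t, HasDerivAt u (-((1 - D2)⁻¹ *ᵥ (D1 *ᵥ η t + u t * (D1 *ᵥ u t)))) t) :
    ∀ t₁ t₂ : ℝ,
      u t₁ ⬝ᵥ ((M * (1 - D2)) *ᵥ η t₁) = u t₂ ⬝ᵥ ((M * (1 - D2)) *ᵥ η t₂) := by
  have hMP : M * (1 - D2) = M + A2 := by rw [mul_sub, mul_one, hD2, sub_neg_eq_add]
  have hA2symm : A2.IsSymm := by
    rw [IsSymm, ← conjTranspose_eq_transpose_of_trivial]
    exact hA2.isHermitian
  have hMPsymm : (M * (1 - D2)).IsSymm := hMP ▸ hMdiag.isSymm.add hA2symm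
  have hP : IsUnit (1 - D2).det := by
    have h := (isUnit_iff_isUnit_det _).1 (hM.add_posSemidef hA2).isUnit
    rw [← hMP, det_mul] at h
    exact isUnit_of_mul_isUnit_right h
  have hD1skew := isSkewAdjoint_of_mul_add_transpose_mul_eq_zero hD1
  have hderiv : ∀ t, HasDerivAt (fun s => u s ⬝ᵥ ((M * (1 - D2)) *ᵥ η s)) 0 t := fun t => by
    have h := (hu t).dotProduct ((hη t).const_mulVec (M * (1 - D2)))
    rwa [neg_dotProduct, mulVec_neg, dotProduct_neg,
      nonsing_inv_mulVec_dotProduct_mul_mulVec hMdiag.isSymm hMPsymm hP,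
      dotProduct_mul_mulVec_nonsing_inv_mulVec M hP, ← neg_add,
      bbm_split_form_flux_eq_zero hMdiag hD1skew, neg_zero] at h
  exact fun t₁ t₂ => is_const_of_deriv_eq_zero (fun t => (hderiv t).differentiableAt)
    (fun t => (hderiv t).deriv) t₁ t₂

/-- Theorem 4.1 (main claim): the split-form BBM-BBM semidiscretization
`∂ₜη = −(I − D2)⁻¹ D1 (u + η∘u)`, `∂ₜu = −(I − D2)⁻¹ (D1 η + u∘(D1 u))`
with consistent periodic SBP operators `D1`, `D2` sharing a diagonal
symmetric positive definite mass matrix `M` conserves the discrete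
quadratic invariant `𝓘(η, u) = uᵀ·M·(I − D2)·η`. -/
theorem bbm_bbm_split_form_conserves_quadratic_invariant
    (m : ℕ) (D1 D2 M A2 : Matrix (Fin m) (Fin m) ℝ)
    (hM : M.PosDef) (hMdiag : M.IsDiag)
    (hD1 : M * D1 + D1ᵀ * M = 0)
    (hD1cons : D1 *ᵥ (1 : Fin m → ℝ) = 0)
    (hA2 : A2.PosSemidef)
    (hD2 : M * D2 = -A2)
    (hD2cons : D2 *ᵥ (1 : Fin m → ℝ) = 0)
    (η u : ℝ → Fin m → ℝ)
    (hη : ∀ t, HasDerivAt η (-((1 - D2)⁻¹ *ᵥ (D1 *ᵥ (u t + η t * u t)))) t)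
    (hu : ∀ t, HasDerivAt u (-((1 - D2)⁻¹ *ᵥ (D1 *ᵥ η t + u t * (D1 *ᵥ u t)))) t) :
    ∀ t₁ t₂ : ℝ,
      u t₁ ⬝ᵥ ((M * (1 - D2)) *ᵥ η t₁) = u t₂ ⬝ᵥ ((M * (1 - D2)) *ᵥ η t₂) :=
  bbm_bbm_split_form_conserves_quadratic_invariant_general m D1 D2 M A2 hM hMdiag hD1 hA2 hD2 η u hη
    hu
end

section
/- Let (D1, M) be a periodic first-derivative SBP operator with M symmetric positive definite and diagonal (M·D1 + D1ᵀ·M = 0), and let D2 be a periodic second-derivative SBP operator with the same mass matrix M (M·D2 = −A2, A2 symmetric positive semidefinite) such that D1 and D2 commute (D1·D2 = D2·D1). Let η, u : ℝ → ℝ^m be differentiable and satisfy the BBM-BBM semidiscretization ∂ₜη = −(I − D2)⁻¹·D1·(u + η∘u), ∂ₜu = −(I − D2)⁻¹·D1·(η + (1/2)·u∘u) for all t. Then the discrete Hamiltonian 𝓗(η(t), u(t)) = −(1/2)·(η(t)ᵀ·M·η(t) + u(t)ᵀ·M·((𝟙 + η(t))∘u(t))) is constant in t. -/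
/-! With `S = 1 - D2`, the matrix `M S = M + A2` is symmetric and `S` commutes with `D1`, which
together with `M D1 + D1ᵀ M = 0` makes `N = M S⁻¹ D1` skew-symmetric. Because `M` is diagonal,
the Hadamard products can be moved across `M`, so along any trajectory
`d𝓗/dt = -(η'ᵀ M b + u'ᵀ M a)` with `a = u + η∘u` and `b = η + u∘u/2`. Substituting
`η' = -S⁻¹ D1 a` and `u' = -S⁻¹ D1 b` turns this into `bᵀ N a + aᵀ N b`, which vanishes. -/

open Matrix

namespace Matrix

section Algebra

variable {n R : Type*} [Fintype n] [CommRing R]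

theorem semiconjBy_transpose_of_isSymm_mul {M D : Matrix n n R} (hM : M.IsSymm)
    (hMD : (M * D).IsSymm) : SemiconjBy M D Dᵀ := by
  rw [SemiconjBy, ← hMD.eq, transpose_mul, hM.eq]

theorem transpose_mul_nonsing_inv_mul_eq_neg [DecidableEq n] {M D S : Matrix n n R}
    (hM : M.IsSymm) (hD : M * D + Dᵀ * M = 0) (hS : IsUnit S.det) (hMS : SemiconjBy M S Sᵀ)
    (hDS : Commute D S) : (M * S⁻¹ * D)ᵀ = -(M * S⁻¹ * D) := by
  have hMS_inv : M * S⁻¹ = (Sᵀ)⁻¹ * M := by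
    simpa only [zpow_neg_one] using
      (SemiconjBy.zpow_right hS (by rwa [det_transpose]) hMS (-1)).eq
  have hDS_inv : D * S⁻¹ = S⁻¹ * D := by
    simpa only [zpow_neg_one] using (Commute.zpow_right hDS (-1)).eq
  calc (M * S⁻¹ * D)ᵀ = Dᵀ * ((Sᵀ)⁻¹ * M) := by
        rw [transpose_mul, transpose_mul, transpose_nonsing_inv, hM.eq]
    _ = Dᵀ * M * S⁻¹ := by rw [← hMS_inv, Matrix.mul_assoc]
    _ = -(M * S⁻¹ * D) := by
        rw [eq_neg_of_add_eq_zero_right hD, Matrix.neg_mul, Matrix.mul_assoc, hDS_inv,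
          Matrix.mul_assoc]

theorem dotProduct_mulVec_add_dotProduct_mulVec_eq_zero {N : Matrix n n R} (hN : Nᵀ = -N)
    (x y : n → R) : x ⬝ᵥ (N *ᵥ y) + y ⬝ᵥ (N *ᵥ x) = 0 := by
  rw [dotProduct_mulVec y, ← mulVec_transpose, hN, neg_mulVec, neg_dotProduct, dotProduct_comm,
    add_neg_cancel]

theorem mulVec_dotProduct_mulVec_of_isSymm {M : Matrix n n R} (hM : M.IsSymm) (B : Matrix n n R)
    (x y : n → R) : (B *ᵥ x) ⬝ᵥ (M *ᵥ y) = y ⬝ᵥ ((M * B) *ᵥ x) := by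
  rw [← mulVec_mulVec, dotProduct_mulVec, ← mulVec_transpose, hM.eq, dotProduct_comm]

theorem IsDiag.mulVec_eq_diag_mul [DecidableEq n] {A : Matrix n n R} (hA : A.IsDiag)
    (x : n → R) : A *ᵥ x = A.diag * x := by
  conv_lhs => rw [← hA.diagonal_diag]
  ext i
  exact mulVec_diagonal _ _ i

end Algebra

end Matrix

section Hamiltonian

variable {n : Type*} [Fintype n] [DecidableEq n]

noncomputable def bbmHamiltonian (M : Matrix n n ℝ) (η u : n → ℝ) : ℝ :=
  -(1 / 2 : ℝ) * (η ⬝ᵥ (M *ᵥ η) + u ⬝ᵥ (M *ᵥ ((1 + η) * u)))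

theorem Matrix.IsDiag.bbmHamiltonian_eq_sum {M : Matrix n n ℝ} (hM : M.IsDiag) (η u : n → ℝ) :
    bbmHamiltonian M η u = ∑ i, -(1 / 2 : ℝ) * M i i * (η i ^ 2 + (1 + η i) * u i ^ 2) := by
  simp only [bbmHamiltonian, hM.mulVec_eq_diag_mul, dotProduct, Finset.mul_sum,
    ← Finset.sum_add_distrib]
  refine Finset.sum_congr rfl fun i _ => ?_
  simp only [Pi.mul_apply, Pi.add_apply, Pi.one_apply, diag_apply]
  ring

theorem Matrix.IsDiag.hasDerivAt_bbmHamiltonian {M : Matrix n n ℝ} (hM : M.IsDiag)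
    {η u : ℝ → n → ℝ} {η' u' : n → ℝ} {t : ℝ} (hη : HasDerivAt η η' t)
    (hu : HasDerivAt u u' t) :
    HasDerivAt (fun s => bbmHamiltonian M (η s) (u s))
      (-(η' ⬝ᵥ (M *ᵥ (η t + (1 / 2 : ℝ) • (u t * u t)))
        + u' ⬝ᵥ (M *ᵥ (u t + η t * u t)))) t := by
  simp only [hM.bbmHamiltonian_eq_sum, hM.mulVec_eq_diag_mul, dotProduct,
    ← Finset.sum_add_distrib, ← Finset.sum_neg_distrib]
  refine HasDerivAt.fun_sum fun i _ => ?_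
  have hηi := hasDerivAt_pi.mp hη i
  have hui := hasDerivAt_pi.mp hu i
  refine (((hηi.fun_pow 2).fun_add ((hηi.const_add 1).fun_mul (hui.fun_pow 2))).const_mul
    (-(1 / 2 : ℝ) * M i i)).congr_deriv ?_
  simp only [Pi.mul_apply, Pi.add_apply, Pi.smul_apply, smul_eq_mul, diag_apply]
  ring

theorem bbmHamiltonian_eq_of_transpose_mul_eq_neg {M B : Matrix n n ℝ} (hM : M.IsDiag)
    (hB : (M * B)ᵀ = -(M * B)) {η u : ℝ → n → ℝ}
    (hη : ∀ t, HasDerivAt η (-(B *ᵥ (u t + η t * u t))) t)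
    (hu : ∀ t, HasDerivAt u (-(B *ᵥ (η t + (1 / 2 : ℝ) • (u t * u t)))) t) (t₁ t₂ : ℝ) :
    bbmHamiltonian M (η t₁) (u t₁) = bbmHamiltonian M (η t₂) (u t₂) := by
  have hH : ∀ t, HasDerivAt (fun s => bbmHamiltonian M (η s) (u s)) 0 t := fun t => by
    refine (hM.hasDerivAt_bbmHamiltonian (hη t) (hu t)).congr_deriv ?_
    rw [neg_dotProduct, neg_dotProduct, mulVec_dotProduct_mulVec_of_isSymm hM.isSymm,
      mulVec_dotProduct_mulVec_of_isSymm hM.isSymm]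
    linarith [dotProduct_mulVec_add_dotProduct_mulVec_eq_zero hB (u t + η t * u t)
      (η t + (1 / 2 : ℝ) • (u t * u t))]
  exact is_const_of_deriv_eq_zero (fun t => (hH t).differentiableAt) (fun t => (hH t).deriv) t₁ t₂

end Hamiltonian

/-- The BBM-BBM semidiscretization
`∂ₜη = −(I − D2)⁻¹ D1 (u + η∘u)`, `∂ₜu = −(I − D2)⁻¹ D1 (η + (1/2) u∘u)`
with periodic SBP operators `D1`, `D2` sharing a diagonal symmetric positive
definite mass matrix `M` and with `D1 D2 = D2 D1` conserves the discrete
Hamiltonian `𝓗(η, u) = −(1/2)(ηᵀ M η + uᵀ M ((𝟙 + η)∘u))`. -/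
theorem bbm_bbm_conserves_hamiltonian
    (m : ℕ) (D1 D2 M A2 : Matrix (Fin m) (Fin m) ℝ)
    (hM : M.PosDef) (hMdiag : M.IsDiag)
    (hD1 : M * D1 + D1ᵀ * M = 0)
    (hA2 : A2.PosSemidef)
    (hD2 : M * D2 = -A2)
    (hcomm : D1 * D2 = D2 * D1)
    (η u : ℝ → Fin m → ℝ)
    (hη : ∀ t, HasDerivAt η (-((1 - D2)⁻¹ *ᵥ (D1 *ᵥ (u t + η t * u t)))) t)
    (hu : ∀ t, HasDerivAt u
      (-((1 - D2)⁻¹ *ᵥ (D1 *ᵥ (η t + (1 / 2 : ℝ) • (u t * u t))))) t) :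
    ∀ t₁ t₂ : ℝ,
      -(1 / 2 : ℝ) * (η t₁ ⬝ᵥ (M *ᵥ η t₁)
          + u t₁ ⬝ᵥ (M *ᵥ (((1 : Fin m → ℝ) + η t₁) * u t₁)))
        = -(1 / 2 : ℝ) * (η t₂ ⬝ᵥ (M *ᵥ η t₂)
          + u t₂ ⬝ᵥ (M *ᵥ (((1 : Fin m → ℝ) + η t₂) * u t₂))) := by
  have hMsymm := hMdiag.isSymm
  have hMS : M * (1 - D2) = M + A2 := by rw [mul_sub, mul_one, hD2, sub_neg_eq_add]
  have hS : IsUnit (1 - D2).det := by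
    rw [← isUnit_iff_isUnit_det]
    exact isUnit_of_mul_isUnit_right (hMS ▸ (hM.add_posSemidef hA2).isUnit)
  have hSM : SemiconjBy M (1 - D2) (1 - D2)ᵀ := by
    rw [transpose_sub, transpose_one]
    refine (SemiconjBy.one_right M).sub_right (semiconjBy_transpose_of_isSymm_mul hMsymm ?_)
    rw [hD2]
    exact (isHermitian_iff_isSymm.mp hA2.isHermitian).neg
  have hN := transpose_mul_nonsing_inv_mul_eq_neg hMsymm hD1 hS hSM
    ((Commute.one_right D1).sub_right hcomm)
  rw [Matrix.mul_assoc] at hN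
  exact bbmHamiltonian_eq_of_transpose_mul_eq_neg hMdiag hN
    (by simpa only [mulVec_mulVec] using hη) (by simpa only [mulVec_mulVec] using hu)
end

section
/- Let (D1, M) be a periodic first-derivative SBP operator (M symmetric positive definite, M·D1 + D1ᵀ·M = 0) and D2 a periodic second-derivative SBP operator with the same mass matrix M (M·D2 = −A2, A2 symmetric positive semidefinite). Let u : ℝ → ℝ^m be differentiable and satisfy ∂ₜu = −(I − D2)⁻¹·D1·u for all t. Then the discrete energy u(t)ᵀ·M·(I − D2)·u(t) is constant in t. -/
open Matrix

/-!
`M (I − D2) = M + A2` is symmetric positive definite, so `I − D2` is invertible and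
`d/dt (uᵀ M (I − D2) u) = 2 uᵀ M (I − D2) ∂ₜu = −2 uᵀ (M D1) u`, which vanishes because the SBP
property makes `M D1` skew-symmetric.
-/

section Derivatives

variable {𝕜 : Type*} [NontriviallyNormedField 𝕜] {m n : Type*} [Fintype n]
  {f g : 𝕜 → n → 𝕜} {f' g' : n → 𝕜} {t : 𝕜}

theorem HasDerivAt.dotProduct_s8 (hf : HasDerivAt f f' t) (hg : HasDerivAt g g' t) :
    HasDerivAt (fun s => f s ⬝ᵥ g s) (f' ⬝ᵥ g t + f t ⬝ᵥ g') t := by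
  have hterm : ∀ i, HasDerivAt (fun s => f s i * g s i) (f' i * g t i + f t i * g' i) t :=
    fun i => (hasDerivAt_pi.mp hf i).mul (hasDerivAt_pi.mp hg i)
  have hsum := HasDerivAt.fun_sum (u := Finset.univ) fun i _ => hterm i
  rw [Finset.sum_add_distrib] at hsum
  exact hsum

theorem HasDerivAt.mulVec (A : Matrix m n 𝕜) (hf : HasDerivAt f f' t) :
    HasDerivAt (fun s => A *ᵥ f s) (A *ᵥ f') t :=
  hasDerivAt_pi.mpr fun i => by
    have hrow := (hasDerivAt_const t (A i)).dotProduct_s8 hf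
    rw [zero_dotProduct, zero_add] at hrow
    exact hrow

theorem HasDerivAt.dotProduct_mulVec_self {A : Matrix n n 𝕜} (hA : Aᵀ = A)
    (hf : HasDerivAt f f' t) :
    HasDerivAt (fun s => f s ⬝ᵥ A *ᵥ f s) (2 * (f t ⬝ᵥ A *ᵥ f')) t := by
  convert hf.dotProduct_s8 (hf.mulVec A) using 1
  rw [two_mul, ← dotProduct_transpose_mulVec, hA]

end Derivatives

theorem Matrix.dotProduct_mul_mulVec_self_eq_zero {R n : Type*} [CommRing R] [NoZeroDivisors R]
    [CharZero R] [Fintype n] {M D : Matrix n n R} (hM : Mᵀ = M) (hD : M * D + Dᵀ * M = 0)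
    (v : n → R) : v ⬝ᵥ (M * D) *ᵥ v = 0 := by
  have hDM : Dᵀ * M = (M * D)ᵀ := by rw [transpose_mul, hM]
  have h := congrArg (fun K => v ⬝ᵥ K *ᵥ v) hD
  simpa only [add_mulVec, dotProduct_add, hDM, dotProduct_transpose_mulVec, zero_mulVec,
    dotProduct_zero, add_self_eq_zero] using h

/-- The semidiscretization `∂ₜu = −(I − D2)⁻¹ D1 u` of the linear dispersive
equation, with periodic SBP operators `D1`, `D2` sharing a symmetric positive
definite mass matrix `M`, conserves the discrete energy `uᵀ·M·(I − D2)·u`. -/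
theorem linear_dispersive_conserves_energy
    (m : ℕ) (D1 D2 M A2 : Matrix (Fin m) (Fin m) ℝ)
    (hM : M.PosDef)
    (hD1 : M * D1 + D1ᵀ * M = 0)
    (hA2 : A2.PosSemidef)
    (hD2 : M * D2 = -A2)
    (u : ℝ → Fin m → ℝ)
    (hu : ∀ t, HasDerivAt u (-((1 - D2)⁻¹ *ᵥ (D1 *ᵥ u t))) t) :
    ∀ t₁ t₂ : ℝ,
      u t₁ ⬝ᵥ ((M * (1 - D2)) *ᵥ u t₁) = u t₂ ⬝ᵥ ((M * (1 - D2)) *ᵥ u t₂) := by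
  have hB : (M * (1 - D2)).PosDef := by
    rw [mul_sub, mul_one, hD2, sub_neg_eq_add]
    exact hM.add_posSemidef hA2
  have hBsymm : (M * (1 - D2))ᵀ = M * (1 - D2) := (isHermitian_iff_isSymm.mp hB.isHermitian).eq
  have hMsymm : Mᵀ = M := (isHermitian_iff_isSymm.mp hM.isHermitian).eq
  have hinv : (1 - D2) * (1 - D2)⁻¹ = 1 :=
    mul_nonsing_inv _ (isUnit_iff_isUnit_det _ |>.mp (isUnit_of_mul_isUnit_right hB.isUnit))
  have hflow : ∀ t, (M * (1 - D2)) *ᵥ -((1 - D2)⁻¹ *ᵥ (D1 *ᵥ u t)) = -((M * D1) *ᵥ u t) := by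
    intro t
    rw [mulVec_neg, ← mulVec_mulVec, mulVec_mulVec (M := 1 - D2), hinv, one_mulVec, mulVec_mulVec]
  have hderiv : ∀ t, HasDerivAt (fun s => u s ⬝ᵥ (M * (1 - D2)) *ᵥ u s) 0 t := fun t => by
    simpa only [hflow, dotProduct_neg, dotProduct_mul_mulVec_self_eq_zero hMsymm hD1, neg_zero,
      mul_zero] using (hu t).dotProduct_mulVec_self hBsymm
  exact is_const_of_deriv_eq_zero (fun t => (hderiv t).differentiableAt) fun t => (hderiv t).deriv
end

section
/- (Part of Theorem 6.1.) Let (D1, M) be a periodic first-derivative SBP operator with diagonal mass matrix (M symmetric positive definite and diagonal, M·D1 + D1ᵀ·M = 0). Let ρ ∈ ℝ^m and K ∈ ℝ^m have strictly positive components; define σ(ε)ᵢ = exp(Kᵢ·εᵢ) − 1 and the pointwise stored energy Σᵢ(s) = (exp(Kᵢ·s) − 1)/Kᵢ − s (so that Σᵢ′ = σᵢ and Σᵢ(0) = 0). Let ε, u : ℝ → ℝ^m be differentiable and satisfy ∂ₜε = D1·u, ∂ₜuᵢ = ρᵢ⁻¹·(D1·σ(ε))ᵢ for all t and all i. Then the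 discrete total energy ∑ᵢ Mᵢᵢ·((1/2)·ρᵢ·uᵢ(t)² + Σᵢ(εᵢ(t))) is constant in t. -/
open Matrix

/-!
Differentiating the energy node by node, the chain rule and `Σᵢ' = σᵢ` turn its rate into
`uᵀ M D1 σ(ε) + (D1 u)ᵀ M σ(ε)`: the factor `ρᵢ` cancels against `ρᵢ⁻¹`, and diagonality of `M`
lets the nodal weights `Mᵢᵢ` be read as the bilinear form of `M`. The SBP property
`M D1 = -D1ᵀ M` makes the two terms cancel, so the energy has zero derivative everywhere.
-/

namespace Matrix

variable {n R : Type*} [Fintype n]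

theorem IsDiag.dotProduct_mulVec [CommSemiring R] {M : Matrix n n R} (hM : M.IsDiag)
    (x y : n → R) : x ⬝ᵥ (M *ᵥ y) = ∑ i, M i i * (x i * y i) := by
  classical
  conv_lhs => rw [← hM.diagonal_diag]
  simp only [dotProduct, mulVec_diagonal, diag_apply]
  exact Finset.sum_congr rfl fun i _ => by ring

theorem dotProduct_mulVec_add_eq_zero_of_sbp [CommRing R] {M D : Matrix n n R}
    (hSBP : M * D + Dᵀ * M = 0) (x y : n → R) :
    x ⬝ᵥ (M *ᵥ (D *ᵥ y)) + (D *ᵥ x) ⬝ᵥ (M *ᵥ y) = 0 := by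
  have hswap : (D *ᵥ x) ⬝ᵥ (M *ᵥ y) = x ⬝ᵥ ((Dᵀ * M) *ᵥ y) := by
    rw [← mulVec_mulVec, dotProduct_mulVec x, vecMul_transpose]
  rw [hswap, mulVec_mulVec, ← dotProduct_add, ← add_mulVec, hSBP, zero_mulVec, dotProduct_zero]

end Matrix

theorem hasDerivAt_exp_storedEnergy {k : ℝ} (hk : k ≠ 0) (s : ℝ) :
    HasDerivAt (fun s => (Real.exp (k * s) - 1) / k - s) (Real.exp (k * s) - 1) s := by
  have hexp : HasDerivAt (fun s => Real.exp (k * s)) (Real.exp (k * s) * k) s := by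
    simpa using ((hasDerivAt_id s).const_mul k).exp
  exact (((hexp.sub_const 1).div_const k).sub (hasDerivAt_id s)).congr_deriv (by field_simp)

theorem hasDerivAt_kinetic_add_storedEnergy {ρ k : ℝ} (hρ : ρ ≠ 0) (hk : k ≠ 0) {e v : ℝ → ℝ}
    {e' f t : ℝ} (he : HasDerivAt e e' t) (hv : HasDerivAt v (ρ⁻¹ * f) t) :
    HasDerivAt (fun t => 1 / 2 * ρ * v t ^ 2 + ((Real.exp (k * e t) - 1) / k - e t))
      (v t * f + e' * (Real.exp (k * e t) - 1)) t := by
  have hkinetic := (hv.pow 2).const_mul (1 / 2 * ρ)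
  have hstored := (hasDerivAt_exp_storedEnergy hk (e t)).comp t he
  refine (hkinetic.add hstored).congr_deriv ?_
  field_simp
  ring

theorem p_system_conserves_total_energy_general
    (m : ℕ) (D1 M : Matrix (Fin m) (Fin m) ℝ)
    (hMdiag : M.IsDiag)
    (hD1 : M * D1 + D1ᵀ * M = 0)
    (ρ K : Fin m → ℝ)
    (hρ : ∀ i, 0 < ρ i) (hK : ∀ i, 0 < K i)
    (ε u : ℝ → Fin m → ℝ)
    (hε : ∀ t, HasDerivAt ε (D1 *ᵥ u t) t)
    (hu : ∀ t, HasDerivAt u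
      (fun i => (ρ i)⁻¹ * (D1 *ᵥ (fun j => Real.exp (K j * ε t j) - 1)) i) t) :
    ∀ t₁ t₂ : ℝ,
      (∑ i, M i i * ((1 / 2 : ℝ) * ρ i * (u t₁ i) ^ 2
          + ((Real.exp (K i * ε t₁ i) - 1) / K i - ε t₁ i)))
        = ∑ i, M i i * ((1 / 2 : ℝ) * ρ i * (u t₂ i) ^ 2
          + ((Real.exp (K i * ε t₂ i) - 1) / K i - ε t₂ i)) := by
  have hrate : ∀ t, HasDerivAt (fun t => ∑ i, M i i * ((1 / 2 : ℝ) * ρ i * (u t i) ^ 2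
      + ((Real.exp (K i * ε t i) - 1) / K i - ε t i))) 0 t := by
    intro t
    let σ : Fin m → ℝ := fun j => Real.exp (K j * ε t j) - 1
    have hnode i := (hasDerivAt_kinetic_add_storedEnergy (hρ i).ne' (hK i).ne'
      (hasDerivAt_pi.mp (hε t) i) (hasDerivAt_pi.mp (hu t) i)).const_mul (M i i)
    refine (HasDerivAt.fun_sum fun i _ => hnode i).congr_deriv ?_
    calc ∑ i, M i i * (u t i * (D1 *ᵥ σ) i + (D1 *ᵥ u t) i * σ i)
        = u t ⬝ᵥ (M *ᵥ (D1 *ᵥ σ)) + (D1 *ᵥ u t) ⬝ᵥ (M *ᵥ σ) := by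
          simp only [hMdiag.dotProduct_mulVec, mul_add, Finset.sum_add_distrib]
      _ = 0 := dotProduct_mulVec_add_eq_zero_of_sbp hD1 (u t) σ
  exact is_const_of_deriv_eq_zero (fun t => (hrate t).differentiableAt) (fun t => (hrate t).deriv)

/-- For the semidiscretized variable-coefficient p-system
`∂ₜε = D1 u`, `∂ₜuᵢ = ρᵢ⁻¹ (D1 σ(ε))ᵢ` with `σ(ε)ᵢ = exp(Kᵢ εᵢ) − 1`,
stored energy `Σᵢ(s) = (exp(Kᵢ s) − 1)/Kᵢ − s`, and `(D1, M)` a periodic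
first-derivative SBP operator with diagonal mass matrix, the discrete total
energy `∑ᵢ Mᵢᵢ ((1/2) ρᵢ uᵢ² + Σᵢ(εᵢ))` is constant. -/
theorem p_system_conserves_total_energy
    (m : ℕ) (D1 M : Matrix (Fin m) (Fin m) ℝ)
    (hM : M.PosDef) (hMdiag : M.IsDiag)
    (hD1 : M * D1 + D1ᵀ * M = 0)
    (ρ K : Fin m → ℝ)
    (hρ : ∀ i, 0 < ρ i) (hK : ∀ i, 0 < K i)
    (ε u : ℝ → Fin m → ℝ)
    (hε : ∀ t, HasDerivAt ε (D1 *ᵥ u t) t)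
    (hu : ∀ t, HasDerivAt u
      (fun i => (ρ i)⁻¹ * (D1 *ᵥ (fun j => Real.exp (K j * ε t j) - 1)) i) t) :
    ∀ t₁ t₂ : ℝ,
      (∑ i, M i i * ((1 / 2 : ℝ) * ρ i * (u t₁ i) ^ 2
          + ((Real.exp (K i * ε t₁ i) - 1) / K i - ε t₁ i)))
        = ∑ i, M i i * ((1 / 2 : ℝ) * ρ i * (u t₂ i) ^ 2
          + ((Real.exp (K i * ε t₂ i) - 1) / K i - ε t₂ i)) :=
  p_system_conserves_total_energy_general m D1 M hMdiag hD1 ρ K hρ hK ε u hε hu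
end

section
/- Let (D1, M) be a periodic first-derivative SBP operator with diagonal mass matrix (M symmetric positive definite and diagonal, M·D1 + D1ᵀ·M = 0) and D2 a periodic second-derivative SBP operator with the same mass matrix M (M·D2 = −A2, A2 symmetric positive semidefinite). Then both I − D2 and 4I − D2 are invertible, and for every differentiable u : ℝ → ℝ^m satisfying the split-form Degasperis-Procesi semidiscretization ∂ₜu = −(1/3)·(I − D2)⁻¹·(4I − D2)·(D1·(u∘u) + u∘(D1·u)) for all t, the discrete invariant (1/2)·u(t)ᵀ·(I − D2)ᵀ·M·(4I − D2)⁻¹·u(t) is constant in t. -/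
/-!
Write `P = I − D2`, `Q = 4I − D2`. Both are `M`-self-adjoint (`Xᵀ M = M X`, because `M D2 = −A2`
is symmetric) and commute, so the invariant is the quadratic form of the symmetric matrix
`S = M P Q⁻¹`, and along the flow `u' = P⁻¹ Q F(u)` its derivative is
`2 uᵀ S P⁻¹ Q F(u) = 2 uᵀ M F(u)`. For the split form
`F(u) = −(1/3)(D1 (u∘u) + u∘(D1 u))` this vanishes: with `M` diagonal,
`uᵀ M (u∘(D1 u)) = (u∘u)ᵀ (M D1) u`, while `uᵀ M D1 (u∘u) = −(u∘u)ᵀ (M D1) u` because `M D1`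
is skew-symmetric.
-/

open Matrix

namespace Matrix

variable {n R : Type*} [Fintype n] [CommRing R]

theorem commute_nonsing_inv_right [DecidableEq n] {A B : Matrix n n R} (h : Commute A B) :
    Commute A B⁻¹ := by
  rw [nonsing_inv_eq_ringInverse]
  by_cases hB : IsUnit B
  · obtain ⟨u, rfl⟩ := hB
    rw [Ring.inverse_unit]
    exact h.units_inv_right
  · rw [Ring.inverse_non_unit _ hB]
    exact Commute.zero_right A

theorem commute_smul_one_sub [DecidableEq n] (D : Matrix n n R) (c d : R) :
    Commute (c • 1 - D) (d • 1 - D) :=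
  ((Commute.one_left _).smul_left c).sub_left
    (((Commute.one_right D).smul_right d).sub_right (Commute.refl D))

theorem transpose_smul_one_sub_mul [DecidableEq n] {M D : Matrix n n R}
    (hM : M.IsSymm) (hMD : (M * D).IsSymm) (c : R) :
    (c • 1 - D)ᵀ * M = M * (c • 1 - D) := by
  have hDM : Dᵀ * M = M * D := by rw [← hM.eq, ← transpose_mul, hM.eq, hMD.eq]
  rw [transpose_sub, transpose_smul, transpose_one, sub_mul, mul_sub, hDM, Matrix.smul_mul,
    Matrix.mul_smul, one_mul, mul_one]

theorem transpose_nonsing_inv_mul_eq [DecidableEq n] {M Q : Matrix n n R} (h : Qᵀ * M = M * Q) :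
    Q⁻¹ᵀ * M = M * Q⁻¹ := by
  by_cases hQ : IsUnit Q.det
  · calc Q⁻¹ᵀ * M = Q⁻¹ᵀ * (M * Q) * Q⁻¹ := by
          rw [mul_assoc, mul_assoc, mul_nonsing_inv _ hQ, mul_one]
      _ = (Q * Q⁻¹)ᵀ * M * Q⁻¹ := by rw [← h, transpose_mul]; simp only [Matrix.mul_assoc]
      _ = M * Q⁻¹ := by rw [mul_nonsing_inv _ hQ, transpose_one, one_mul]
  · simp [nonsing_inv_apply_not_isUnit _ hQ]

theorem isSymm_mul_mul_nonsing_inv [DecidableEq n] {M P Q : Matrix n n R} (hM : M.IsSymm)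
    (hPM : Pᵀ * M = M * P) (hQM : Qᵀ * M = M * Q) (hPQ : Commute P Q) : (M * P * Q⁻¹).IsSymm := by
  rw [IsSymm, transpose_mul, transpose_mul, hM.eq, hPM, ← Matrix.mul_assoc,
    transpose_nonsing_inv_mul_eq hQM, Matrix.mul_assoc, ← (commute_nonsing_inv_right hPQ).eq,
    Matrix.mul_assoc]

theorem isUnit_smul_one_sub_of_mul_eq_neg [DecidableEq n] {M A D : Matrix n n ℝ}
    (hM : M.PosDef) (hA : A.PosSemidef) (hD : M * D = -A) {c : ℝ} (hc : 0 < c) :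
    IsUnit (c • 1 - D) := by
  have hpos : (M * (c • 1 - D)).PosDef := by
    rw [mul_sub, hD, Matrix.mul_smul, mul_one, sub_neg_eq_add]
    exact (hM.smul hc).add_posSemidef hA
  exact isUnit_of_mul_isUnit_right hpos.isUnit

theorem IsDiag.mulVec_mul {M : Matrix n n R} (hM : M.IsDiag) (a b : n → R) :
    M *ᵥ (a * b) = a * (M *ᵥ b) := by
  classical
  rw [← hM.diagonal_diag]
  ext i
  simp only [mulVec_diagonal, Pi.mul_apply]
  ring

theorem dotProduct_mulVec_splitForm_eq_zero {M D : Matrix n n R}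
    (hM : M.IsDiag) (hD : M * D + Dᵀ * M = 0) (v : n → R) :
    v ⬝ᵥ (M *ᵥ (D *ᵥ (v * v) + v * (D *ᵥ v))) = 0 := by
  have hskew : (M * D)ᵀ = -(M * D) := by
    rw [transpose_mul, hM.isSymm.eq, eq_neg_iff_add_eq_zero, add_comm, hD]
  have hconv : v ⬝ᵥ (M *ᵥ (D *ᵥ (v * v))) = -((v * v) ⬝ᵥ ((M * D) *ᵥ v)) := by
    rw [mulVec_mulVec, dotProduct_mulVec, ← mulVec_transpose, hskew, neg_mulVec,
      neg_dotProduct, dotProduct_comm]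
  have hadv : v ⬝ᵥ (M *ᵥ (v * (D *ᵥ v))) = (v * v) ⬝ᵥ ((M * D) *ᵥ v) := by
    rw [hM.mulVec_mul, ← mulVec_mulVec]
    simp only [dotProduct, Pi.mul_apply, mul_assoc]
  rw [mulVec_add, dotProduct_add, hconv, hadv, neg_add_cancel]

theorem hasDerivAt_dotProduct_mulVec (S : Matrix n n ℝ) {u : ℝ → n → ℝ} {u' : n → ℝ} {t : ℝ}
    (hu : HasDerivAt u u' t) :
    HasDerivAt (fun s => u s ⬝ᵥ (S *ᵥ u s)) (u' ⬝ᵥ (S *ᵥ u t) + u t ⬝ᵥ (S *ᵥ u')) t := by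
  have hSu : HasDerivAt (fun s => S *ᵥ u s) (S *ᵥ u') t :=
    (mulVecLin S).toContinuousLinearMap.hasFDerivAt.comp_hasDerivAt t hu
  simp only [dotProduct, ← Finset.sum_add_distrib]
  exact HasDerivAt.fun_sum fun i _ => (hasDerivAt_pi.mp hu i).mul (hasDerivAt_pi.mp hSu i)

theorem dotProduct_mulVec_eq_of_forall_orthogonal {S : Matrix n n ℝ} (hS : S.IsSymm)
    {u f : ℝ → n → ℝ} (hu : ∀ t, HasDerivAt u (f t) t)
    (horth : ∀ t, u t ⬝ᵥ (S *ᵥ f t) = 0) (t₁ t₂ : ℝ) :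
    u t₁ ⬝ᵥ (S *ᵥ u t₁) = u t₂ ⬝ᵥ (S *ᵥ u t₂) := by
  have hzero : ∀ t, HasDerivAt (fun s => u s ⬝ᵥ (S *ᵥ u s)) 0 t := fun t => by
    have hsymm : f t ⬝ᵥ (S *ᵥ u t) = u t ⬝ᵥ (S *ᵥ f t) := by
      rw [dotProduct_mulVec, dotProduct_comm, ← mulVec_transpose, hS.eq]
    simpa [hsymm, horth t] using hasDerivAt_dotProduct_mulVec S (hu t)
  exact is_const_of_deriv_eq_zero (fun t => (hzero t).differentiableAt)
    (fun t => (hzero t).deriv) t₁ t₂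

theorem dotProduct_mulVec_nonsing_inv_eq_of_orthogonal [DecidableEq n] {M P Q : Matrix n n ℝ}
    (hM : M.IsSymm) (hPM : Pᵀ * M = M * P) (hQM : Qᵀ * M = M * Q) (hPQ : Commute P Q)
    (hP : IsUnit P) (hQ : IsUnit Q) {F : (n → ℝ) → n → ℝ} (hF : ∀ v, v ⬝ᵥ (M *ᵥ F v) = 0)
    {u : ℝ → n → ℝ} (hu : ∀ t, HasDerivAt u (P⁻¹ *ᵥ (Q *ᵥ F (u t))) t) (t₁ t₂ : ℝ) :
    (P *ᵥ u t₁) ⬝ᵥ (M *ᵥ (Q⁻¹ *ᵥ u t₁)) = (P *ᵥ u t₂) ⬝ᵥ (M *ᵥ (Q⁻¹ *ᵥ u t₂)) := by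
  have hform : ∀ v, (P *ᵥ v) ⬝ᵥ (M *ᵥ (Q⁻¹ *ᵥ v)) = v ⬝ᵥ ((M * P * Q⁻¹) *ᵥ v) := fun v => by
    rw [dotProduct_comm, dotProduct_mulVec, ← mulVec_transpose, dotProduct_comm, mulVec_mulVec,
      mulVec_mulVec, hPM]
  have hflow : M * P * Q⁻¹ * P⁻¹ * Q = M := by
    rw [Matrix.mul_assoc _ P⁻¹, ← (commute_nonsing_inv_right hPQ.symm).eq]
    simp only [Matrix.mul_assoc]
    rw [← Matrix.mul_assoc Q⁻¹, nonsing_inv_mul _ ((isUnit_iff_isUnit_det Q).mp hQ), one_mul,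
      mul_nonsing_inv _ ((isUnit_iff_isUnit_det P).mp hP), mul_one]
  simp only [hform]
  refine dotProduct_mulVec_eq_of_forall_orthogonal (isSymm_mul_mul_nonsing_inv hM hPM hQM hPQ)
    hu (fun t => ?_) t₁ t₂
  rw [mulVec_mulVec, mulVec_mulVec, hflow, hF]

end Matrix

/-- For periodic SBP operators `D1`, `D2` with a common diagonal symmetric
positive definite mass matrix `M`, both `I − D2` and `4I − D2` are invertible,
and the split-form Degasperis-Procesi semidiscretization
`∂ₜu = −(1/3)(I − D2)⁻¹ (4I − D2) (D1 (u∘u) + u∘(D1 u))`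
conserves the discrete invariant `(1/2) uᵀ (I − D2)ᵀ M (4I − D2)⁻¹ u`. -/
theorem degasperis_procesi_conserves_invariant
    (m : ℕ) (D1 D2 M A2 : Matrix (Fin m) (Fin m) ℝ)
    (hM : M.PosDef) (hMdiag : M.IsDiag)
    (hD1 : M * D1 + D1ᵀ * M = 0)
    (hA2 : A2.PosSemidef)
    (hD2 : M * D2 = -A2) :
    IsUnit (1 - D2) ∧ IsUnit (4 - D2) ∧
      ∀ u : ℝ → Fin m → ℝ,
        (∀ t, HasDerivAt u
          (-((1 / 3 : ℝ) • ((1 - D2)⁻¹ *ᵥ ((4 - D2) *ᵥ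
            (D1 *ᵥ (u t * u t) + u t * (D1 *ᵥ u t)))))) t) →
        ∀ t₁ t₂ : ℝ,
          (1 / 2 : ℝ) * (((1 - D2) *ᵥ u t₁) ⬝ᵥ (M *ᵥ ((4 - D2)⁻¹ *ᵥ u t₁)))
            = (1 / 2 : ℝ) * (((1 - D2) *ᵥ u t₂) ⬝ᵥ (M *ᵥ ((4 - D2)⁻¹ *ᵥ u t₂))) := by
  have hMD2 : (M * D2).IsSymm := by
    rw [hD2]
    exact (isHermitian_iff_isSymm.mp hA2.isHermitian).neg
  rw [show (1 : Matrix (Fin m) (Fin m) ℝ) - D2 = (1 : ℝ) • 1 - D2 by rw [one_smul],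
    show (4 : Matrix (Fin m) (Fin m) ℝ) - D2 = (4 : ℝ) • 1 - D2 by rw [ofNat_smul_eq_nsmul]; simp]
  have hP := isUnit_smul_one_sub_of_mul_eq_neg hM hA2 hD2 one_pos
  have hQ := isUnit_smul_one_sub_of_mul_eq_neg hM hA2 hD2 four_pos
  refine ⟨hP, hQ, fun u hu t₁ t₂ => ?_⟩
  congr 1
  refine dotProduct_mulVec_nonsing_inv_eq_of_orthogonal hMdiag.isSymm
    (transpose_smul_one_sub_mul hMdiag.isSymm hMD2 1)
    (transpose_smul_one_sub_mul hMdiag.isSymm hMD2 4) (commute_smul_one_sub D2 1 4) hP hQ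
    (F := fun v => -((1 / 3 : ℝ) • (D1 *ᵥ (v * v) + v * (D1 *ᵥ v)))) (fun v => ?_)
    (fun t => ?_) t₁ t₂
  · rw [mulVec_neg, mulVec_smul, dotProduct_neg, dotProduct_smul,
      dotProduct_mulVec_splitForm_eq_zero hMdiag hD1, smul_zero, neg_zero]
  · simpa only [mulVec_neg, mulVec_smul] using hu t
end
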